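/- Define the formal power series 𝔙(z) = 12·∑_{n=0}^∞ (−1)ⁿ · (6n+1)! · (n!)³ / ((3n)! · (2n)! · ((2n+1)!)²) · z^{2n+1} over ℚ, and the operator L = (1/4)·(D² + 27z²(D + 2/3)(D + 4/3)) with D = z·d/dz. Then L𝔙 = 3z. -/

import Mathlib

/-- Euler operator `D = z d/dz` on formal power series. -/
noncomputable def Dop (f : PowerSeries ℚ) : PowerSeries ℚ :=
  PowerSeries.mk fun n => (n : ℚ) * PowerSeries.coeff (R := ℚ) n f

/-- The quasi-period series
`𝔙(z) = 12 ∑ₙ (−1)ⁿ (6n+1)! n!³ / ((3n)!(2n)!((2n+1)!)²) z^{2n+1}`. -/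
noncomputable def V : PowerSeries ℚ :=
  PowerSeries.mk fun k =>
    if k % 2 = 1 then
      12 * (-1) ^ (k / 2) * (Nat.factorial (6 * (k / 2) + 1) : ℚ) *
        ((Nat.factorial (k / 2) : ℚ)) ^ 3 /
        ((Nat.factorial (3 * (k / 2)) : ℚ) * (Nat.factorial (2 * (k / 2)) : ℚ) *
          ((Nat.factorial (2 * (k / 2) + 1) : ℚ)) ^ 2)
    else 0

/-- The operator `L = (1/4)(D² + 27 z² (D + 2/3)(D + 4/3))`. -/
noncomputable def L (f : PowerSeries ℚ) : PowerSeries ℚ :=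
  PowerSeries.C (R := ℚ) (1 / 4) *
    (Dop (Dop f) +
      PowerSeries.C (R := ℚ) 27 * PowerSeries.X ^ 2 *
        (Dop (Dop f + PowerSeries.C (R := ℚ) (4 / 3) * f) +
          PowerSeries.C (R := ℚ) (2 / 3) * (Dop f + PowerSeries.C (R := ℚ) (4 / 3) * f))) 

lemma coeff_Dop (f : PowerSeries ℚ) (n : ℕ) :
    PowerSeries.coeff (R := ℚ) n (Dop f) = (n : ℚ) * PowerSeries.coeff (R := ℚ) n f :=
  PowerSeries.coeff_mk _ _

noncomputable def aa (m : ℕ) : ℚ :=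
  (Nat.factorial (6 * m + 1) : ℚ) * ((Nat.factorial m : ℚ)) ^ 3 /
    ((Nat.factorial (3 * m) : ℚ) * (Nat.factorial (2 * m) : ℚ) *
      ((Nat.factorial (2 * m + 1) : ℚ)) ^ 2)

lemma factQ_ne (k : ℕ) : ((Nat.factorial k : ℚ)) ≠ 0 := by
  exact_mod_cast (Nat.factorial_ne_zero k)

lemma key (m : ℕ) :
    ((2 * m + 3 : ℚ)) ^ 2 * aa (m + 1) = 3 * ((6 * m + 5 : ℚ)) * ((6 * m + 7 : ℚ)) * aa m := by
  have h7 : Nat.factorial (6 * (m+1) + 1) =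
      (6*m+7)*(6*m+6)*(6*m+5)*(6*m+4)*(6*m+3)*(6*m+2) * Nat.factorial (6 * m + 1) := by
    rw [show 6 * (m+1) + 1 = (6*m+1)+1+1+1+1+1+1 by ring]
    simp only [Nat.factorial_succ]
    ring
  have hm : Nat.factorial (m + 1) = (m+1) * Nat.factorial m := Nat.factorial_succ m
  have h3 : Nat.factorial (3 * (m+1)) = (3*m+3)*(3*m+2)*(3*m+1) * Nat.factorial (3*m) := by
    rw [show 3 * (m+1) = 3*m+1+1+1 by ring]
    simp only [Nat.factorial_succ]
    ring
  have h2 : Nat.factorial (2 * (m+1)) = (2*m+2)*(2*m+1) * Nat.factorial (2*m) := by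
    rw [show 2 * (m+1) = 2*m+1+1 by ring]
    simp only [Nat.factorial_succ]
    ring
  have h2' : Nat.factorial (2 * (m+1) + 1) = (2*m+3)*(2*m+2) * Nat.factorial (2*m+1) := by
    rw [show 2 * (m+1) + 1 = 2*m+1+1+1 by ring]
    simp only [Nat.factorial_succ]
    ring
  unfold aa
  rw [h7, hm, h3, h2, h2']
  push_cast
  have d1 : ((3:ℚ) * m + 3) * (3 * m + 2) * (3 * m + 1) * (Nat.factorial (3*m) : ℚ) *
      ((2 * m + 2) * (2 * m + 1) * (Nat.factorial (2*m) : ℚ)) *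
      ((2 * m + 3) * (2 * m + 2) * (Nat.factorial (2*m+1) : ℚ)) ^ 2 ≠ 0 := by positivity
  have d2 : ((Nat.factorial (3*m) : ℚ)) * (Nat.factorial (2*m) : ℚ) *
      ((Nat.factorial (2*m+1) : ℚ)) ^ 2 ≠ 0 := by positivity
  field_simp
  ring

/-- `L 𝔙 = 3z`. -/
theorem stmt_14 : L V = PowerSeries.C (R := ℚ) 3 * PowerSeries.X := by
  have hV : ∀ k, PowerSeries.coeff (R := ℚ) k V =
      (if k % 2 = 1 then (12 : ℚ) * (-1) ^ (k / 2) * aa (k / 2) else 0) := by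
    intro k
    rw [V, PowerSeries.coeff_mk]
    split_ifs with h
    · rw [aa]; ring
    · rfl
  ext n
  rw [L, mul_assoc (PowerSeries.C (R := ℚ) 27)]
  simp only [map_mul, map_add, PowerSeries.coeff_C_mul, coeff_Dop,
    PowerSeries.coeff_X_pow_mul', PowerSeries.coeff_C_mul]
  match n with
  | 0 => simp [hV]
  | 1 =>
      simp only [hV]
      norm_num [aa]
  | (d+2) =>
      have hle : 2 ≤ d + 2 := by omega
      rw [if_pos hle]
      have hsub : d + 2 - 2 = d := by omega
      rw [hsub]
      rcases Nat.even_or_odd d with ⟨r, hr⟩ | ho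
      · -- d even : both coefficients of V vanish
        have h1 : (d + 2) % 2 = 0 := by omega
        have h2 : d % 2 = 0 := by omega
        rw [PowerSeries.coeff_X, if_neg (by omega)]
        simp [hV, h1, h2]
      · obtain ⟨m, hm⟩ := ho
        have h1 : (d + 2) % 2 = 1 := by omega
        have h2 : d % 2 = 1 := by omega
        have hq1 : (d + 2) / 2 = m + 1 := by omega
        have hq2 : d / 2 = m := by omega
        simp only [hV, h1, h2, if_pos, hq1, hq2]
        have hX : PowerSeries.coeff (R := ℚ) (d+2) (PowerSeries.X : PowerSeries ℚ) = 0 := by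
          rw [PowerSeries.coeff_X, if_neg (by omega)]
        rw [hX, mul_zero]
        have hk := key m
        have hd : (d : ℚ) = 2 * m + 1 := by exact_mod_cast congrArg (Nat.cast : ℕ → ℚ) hm
        push_cast [hd]
        linear_combination (-3 * (-1 : ℚ) ^ m) * hk
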